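/- Let Ω ⊂ R^n (n ≥ 2) be a uniformly C^1 domain and p > n. Then there exist constants r_0 > 0 and C such that for all x_0 ∈ Ω and 0 < r ≤ r_0 with d_Ω(x_0) < r: ‖φ‖_{L^∞(Ω_{x_0,r})} ≤ C r^{-n/p} ( ‖φ‖_{L^p(Ω_{x_0,2r})} + r ‖∇φ‖_{L^p(Ω_{x_0,2r})} ) for all φ ∈ W^{1,p}_loc(Ω̄), with C independent of x_0 and r. -/

import Mathlib

/-!
Every `x ∈ Ω ∩ B(x₀, r)` sees a ball `B` of radius `≍ r` through a cone inside `Ω ∩ B(x₀, 2r)`: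
near the boundary, push `x` by `r/2` in the inward direction of a `C¹` graph chart, whose uniform
Lipschitz constant `K` fixes the opening `(8(1 + K))⁻¹` of the cone. Averaging
`|φ x| ≤ |φ w| + |w - x| ∫₀¹ |∇φ (x + t(w - x))| dt` over `w ∈ B`, swapping the integrals and
rescaling the slice at time `t` by the homothety of ratio `t` about `x`, the gradient term is at
most `∫₀¹ t^(-n/p) dt · ‖∇φ‖_p |B|^(1 - 1/p)`, and `∫₀¹ t^(-n/p) dt = p/(p - n)` is finite
exactly because `p > n`. Hölder on `B` bounds the other term, and dividing by `|B| ≍ rⁿ` gives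
`r^(-n/p)`.
-/

open Metric MeasureTheory

noncomputable section

/-- A local graph representation of the boundary: near `x₀`, after a rotation `e`,
`Ω` coincides with the region above the graph of a `C^k` function `h` with `C^k`
norm at most `K`. -/
def IsCkGraphAt (n k : ℕ) (Ω : Set (EuclideanSpace ℝ (Fin n))) (α β K : ℝ)
    (x₀ : EuclideanSpace ℝ (Fin n)) : Prop :=
  ∃ (e : EuclideanSpace ℝ (Fin n) ≃ₗᵢ[ℝ] WithLp 2 (EuclideanSpace ℝ (Fin (n - 1)) × ℝ))
    (h : EuclideanSpace ℝ (Fin (n - 1)) → ℝ),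
    ContDiffOn ℝ (k : ℕ∞) h (ball 0 α) ∧ h 0 = 0 ∧
    fderivWithin ℝ h (ball 0 α) 0 = 0 ∧
    (∀ m : ℕ, m ≤ k → ∀ y' ∈ ball (0 : EuclideanSpace ℝ (Fin (n - 1))) α,
      ‖iteratedFDerivWithin ℝ m h (ball 0 α) y'‖ ≤ K) ∧
    ∀ (y' : EuclideanSpace ℝ (Fin (n - 1))) (t : ℝ), ‖y'‖ < α → |t| < β →
      (x₀ + e.symm ((WithLp.equiv 2 (EuclideanSpace ℝ (Fin (n - 1)) × ℝ)).symm
        (y', h y' + t)) ∈ Ω ↔ 0 < t)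

/-- A bounded domain (open connected bounded set) with `C^k` boundary. -/
def IsBoundedCkDomain (n k : ℕ) (D : Set (EuclideanSpace ℝ (Fin n))) : Prop :=
  IsOpen D ∧ IsConnected D ∧ Bornology.IsBounded D ∧
  ∀ x₀ ∈ frontier D, ∃ α > (0:ℝ), ∃ β > (0:ℝ), ∃ K : ℝ, IsCkGraphAt n k D α β K x₀

/-- A uniformly `C^k` domain: graph representations with uniform constants `α, β, K`. -/
def IsUniformlyCkDomain (n k : ℕ) (Ω : Set (EuclideanSpace ℝ (Fin n))) : Prop :=
  IsOpen Ω ∧ IsConnected Ω ∧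
  ∃ α > (0:ℝ), ∃ β > (0:ℝ), ∃ K : ℝ, ∀ x₀ ∈ frontier Ω, IsCkGraphAt n k Ω α β K x₀

end

open Metric MeasureTheory Set ENNReal AffineMap

theorem lintegral_Ioc_zero_one_rpow {s : ℝ} (hs : -1 < s) :
    ∫⁻ t in Ioc (0:ℝ) 1, ENNReal.ofReal (t ^ s) = ENNReal.ofReal (1 / (s + 1)) := by
  have hint : IntegrableOn (fun t : ℝ => t ^ s) (Ioc 0 1) :=
    (intervalIntegrable_iff_integrableOn_Ioc_of_le zero_le_one).1
      (intervalIntegral.intervalIntegrable_rpow' hs)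
  rw [← ofReal_integral_eq_lintegral_ofReal hint
      (ae_restrict_of_forall_mem measurableSet_Ioc fun t ht => Real.rpow_nonneg ht.1.le s),
    ← intervalIntegral.integral_of_le zero_le_one, integral_rpow (Or.inl hs),
    Real.one_rpow, Real.zero_rpow (by linarith), sub_zero]

theorem setLIntegral_enorm_le_eLpNorm_mul_measure {α F : Type*} [MeasurableSpace α]
    {μ : Measure α} [NormedAddCommGroup F] {g : α → F} {B : Set α}
    (hg : AEStronglyMeasurable g (μ.restrict B)) {p : ℝ} (hp : 1 ≤ p) :
    ∫⁻ w in B, ‖g w‖ₑ ∂μ ≤ eLpNorm g (ENNReal.ofReal p) (μ.restrict B) * μ B ^ (1 - 1 / p) := by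
  have := eLpNorm_le_eLpNorm_mul_rpow_measure_univ (ENNReal.one_le_ofReal.2 hp) hg
  rwa [eLpNorm_one_eq_lintegral_enorm, Measure.restrict_apply_univ, toReal_one,
    toReal_ofReal (by linarith), div_one] at this

theorem enorm_sub_le_lintegral_enorm_deriv {F : Type*} [NormedAddCommGroup F] [NormedSpace ℝ F]
    [CompleteSpace F] {g : ℝ → F} {a b : ℝ} (hab : a ≤ b)
    (hg : ∀ t ∈ Icc a b, DifferentiableAt ℝ g t) :
    ‖g b - g a‖ₑ ≤ ∫⁻ t in Ioc a b, ‖deriv g t‖ₑ := by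
  by_cases hfin : ∫⁻ t in Ioc a b, ‖deriv g t‖ₑ = ∞
  · simp [hfin]
  have hint : IntervalIntegrable (deriv g) volume a b :=
    (intervalIntegrable_iff_integrableOn_Ioc_of_le hab).2
      ⟨aestronglyMeasurable_deriv g _, lt_top_iff_ne_top.2 hfin⟩
  rw [← intervalIntegral.integral_eq_sub_of_hasDerivAt
    (fun t ht => (hg t (uIcc_of_le hab ▸ ht)).hasDerivAt) hint,
    intervalIntegral.integral_of_le hab]
  exact enorm_integral_le_lintegral_enorm _

theorem enorm_sub_le_mul_lintegral_enorm_fderiv {E F : Type*} [NormedAddCommGroup E]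
    [NormedSpace ℝ E] [NormedAddCommGroup F] [NormedSpace ℝ F] [CompleteSpace F] {f : E → F}
    {x w : E} (hf : ∀ t ∈ Icc (0:ℝ) 1, DifferentiableAt ℝ f (lineMap x w t)) :
    ‖f w - f x‖ₑ ≤ ‖w - x‖ₑ * ∫⁻ t in Ioc (0:ℝ) 1, ‖fderiv ℝ f (lineMap x w t)‖ₑ := by
  have hline : ∀ t : ℝ, HasDerivAt (lineMap x w : ℝ → E) (w - x) t := fun t => by
    simpa using hasDerivAt_lineMap (a := x) (b := w) (x := t)
  have hderiv : ∀ t ∈ Icc (0:ℝ) 1,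
      HasDerivAt (f ∘ lineMap x w) (fderiv ℝ f (lineMap x w t) (w - x)) t := fun t ht =>
    (hf t ht).hasFDerivAt.comp_hasDerivAt t (hline t)
  calc ‖f w - f x‖ₑ = ‖(f ∘ lineMap x w) 1 - (f ∘ lineMap x w) 0‖ₑ := by simp
    _ ≤ ∫⁻ t in Ioc (0:ℝ) 1, ‖deriv (f ∘ lineMap x w) t‖ₑ :=
        enorm_sub_le_lintegral_enorm_deriv zero_le_one fun t ht =>
          (hderiv t ht).differentiableAt
    _ ≤ ∫⁻ t in Ioc (0:ℝ) 1, ‖w - x‖ₑ * ‖fderiv ℝ f (lineMap x w t)‖ₑ := by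
        refine setLIntegral_mono' measurableSet_Ioc fun t ht => ?_
        rw [(hderiv t (Ioc_subset_Icc_self ht)).deriv, mul_comm]
        exact ContinuousLinearMap.le_opENorm _ _
    _ = _ := lintegral_const_mul' _ _ enorm_ne_top

theorem forall_lineMap_mem_of_convexJoin_subset {V : Type*} [AddCommGroup V] [Module ℝ V]
    {x : V} {A B : Set V}
    (hcone : convexJoin ℝ {x} B ⊆ A) : ∀ w ∈ B, ∀ t ∈ Icc (0:ℝ) 1, lineMap x w t ∈ A := by
  intro w hw t ht
  refine hcone ?_
  rw [convexJoin_singleton_left]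
  exact mem_biUnion hw (segment_eq_image_lineMap ℝ x w ▸ mem_image_of_mem _ ht)

section AddHaar

variable {E : Type*} [NormedAddCommGroup E] [NormedSpace ℝ E] [FiniteDimensional ℝ E]
  [MeasurableSpace E] [BorelSpace E] (μ : Measure E) [μ.IsAddHaarMeasure]

theorem map_homothety_addHaar (x : E) {c : ℝ} (hc : c ≠ 0) :
    μ.map (homothety x c) = ENNReal.ofReal |(c ^ Module.finrank ℝ E)⁻¹| • μ := by
  have hdecomp : ⇑(homothety x c) = (· + x) ∘ (c • ·) ∘ (· - x) := by
    ext y; simp [homothety_apply]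
  rw [hdecomp, ← Measure.map_map (by fun_prop) (by fun_prop),
    ← Measure.map_map (by fun_prop) (by fun_prop), map_sub_right_eq_self,
    Measure.map_addHaar_smul μ hc, Measure.map_smul, map_add_right_eq_self]

theorem eLpNorm_comp_homothety {F : Type*} [NormedAddCommGroup F] {g : E → F}
    (hg : StronglyMeasurable g) (x : E) {t : ℝ} (ht : 0 < t) {p : ℝ} (hp : 0 < p) :
    eLpNorm (g ∘ homothety x t) (ENNReal.ofReal p) μ
      = ENNReal.ofReal (t ^ (-(Module.finrank ℝ E : ℝ) / p)) * eLpNorm g (ENNReal.ofReal p) μ := by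
  have hmeas : Measurable (homothety x t) := (homothety_continuous x t).measurable
  rw [← eLpNorm_map_measure (hg.aestronglyMeasurable) hmeas.aemeasurable,
    map_homothety_addHaar μ x ht.ne', eLpNorm_smul_measure_of_ne_top ofReal_ne_top, smul_eq_mul,
    one_div, toReal_inv, toReal_ofReal hp.le, ofReal_rpow_of_nonneg (abs_nonneg _) (by positivity),
    abs_of_pos (by positivity), ← Real.rpow_natCast, ← Real.rpow_neg ht.le, ← Real.rpow_mul ht.le]
  ring_nf

theorem setLIntegral_enorm_comp_homothety_le {F : Type*} [NormedAddCommGroup F] {g : E → F}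
    (hg : StronglyMeasurable g) (x : E) {t : ℝ} (ht : 0 < t) {A B : Set E}
    (hA : MeasurableSet A) (hB : MeasurableSet B) (hBA : ∀ w ∈ B, homothety x t w ∈ A)
    {p : ℝ} (hp : 1 ≤ p) :
    ∫⁻ w in B, ‖g (homothety x t w)‖ₑ ∂μ ≤ ENNReal.ofReal (t ^ (-(Module.finrank ℝ E : ℝ) / p))
      * eLpNorm g (ENNReal.ofReal p) (μ.restrict A) * μ B ^ (1 - 1 / p) := by
  have hcomp : (fun w => g (homothety x t w)) =ᵐ[μ.restrict B] A.indicator g ∘ homothety x t := by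
    filter_upwards [ae_restrict_mem hB] with w hw
    simp [indicator_of_mem (hBA w hw)]
  have hmeas : Measurable (homothety x t) := (homothety_continuous x t).measurable
  calc ∫⁻ w in B, ‖g (homothety x t w)‖ₑ ∂μ
      ≤ eLpNorm (fun w => g (homothety x t w)) (ENNReal.ofReal p) (μ.restrict B)
          * μ B ^ (1 - 1 / p) :=
        setLIntegral_enorm_le_eLpNorm_mul_measure
          (hg.comp_measurable hmeas).aestronglyMeasurable hp
    _ ≤ eLpNorm (A.indicator g ∘ homothety x t) (ENNReal.ofReal p) μ * μ B ^ (1 - 1 / p) := by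
        rw [eLpNorm_congr_ae hcomp]
        gcongr
        exact Measure.restrict_le_self
    _ = _ := by
        rw [eLpNorm_comp_homothety μ (hg.indicator hA) x ht (by linarith),
          eLpNorm_indicator_eq_eLpNorm_restrict hA]

theorem lintegral_lintegral_enorm_fderiv_lineMap_le {F : Type*} [NormedAddCommGroup F]
    [NormedSpace ℝ F] [CompleteSpace F] (f : E → F) {x : E} {A B : Set E} (hA : MeasurableSet A)
    (hB : MeasurableSet B) (hcone : ∀ w ∈ B, ∀ t ∈ Icc (0:ℝ) 1, lineMap x w t ∈ A)
    {p : ℝ} (hp : 1 ≤ p) (hpd : (Module.finrank ℝ E : ℝ) < p) :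
    ∫⁻ w in B, (∫⁻ t in Ioc (0:ℝ) 1, ‖fderiv ℝ f (lineMap x w t)‖ₑ) ∂μ
      ≤ ENNReal.ofReal (p / (p - Module.finrank ℝ E))
        * eLpNorm (fderiv ℝ f) (ENNReal.ofReal p) (μ.restrict A) * μ B ^ (1 - 1 / p) := by
  set d : ℝ := (Module.finrank ℝ E : ℝ)
  have hg : StronglyMeasurable fun y => ‖fderiv ℝ f y‖ :=
    (measurable_fderiv ℝ f).norm.stronglyMeasurable
  calc ∫⁻ w in B, (∫⁻ t in Ioc (0:ℝ) 1, ‖fderiv ℝ f (lineMap x w t)‖ₑ) ∂μ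
      = ∫⁻ t in Ioc (0:ℝ) 1, ∫⁻ w in B, ‖‖fderiv ℝ f (homothety x t w)‖‖ₑ ∂μ := by
        simp_rw [enorm_norm, homothety_eq_lineMap]
        exact lintegral_lintegral_swap ((measurable_fderiv ℝ f).enorm.comp
          (by fun_prop : Measurable fun q : E × ℝ => lineMap x q.1 q.2)).aemeasurable
    _ ≤ ∫⁻ t in Ioc (0:ℝ) 1, ENNReal.ofReal (t ^ (-d / p))
          * (eLpNorm (fderiv ℝ f) (ENNReal.ofReal p) (μ.restrict A) * μ B ^ (1 - 1 / p)) := by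
        refine setLIntegral_mono' measurableSet_Ioc fun t ht => ?_
        rw [← mul_assoc, ← eLpNorm_norm]
        exact setLIntegral_enorm_comp_homothety_le μ hg x ht.1 hA hB
          (fun w hw => homothety_eq_lineMap x t w ▸ hcone w hw t (Ioc_subset_Icc_self ht)) hp
    _ = _ := by
        have hpos : 0 < p := by linarith
        rw [lintegral_mul_const _ (by fun_prop), lintegral_Ioc_zero_one_rpow, ← mul_assoc]
        · congr 3
          field_simp
          ring
        · rw [neg_div, neg_lt_neg_iff, div_lt_one hpos]; exact hpd

theorem enorm_mul_measure_le_of_convexJoin_subset {F : Type*} [NormedAddCommGroup F]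
    [NormedSpace ℝ F] [CompleteSpace F] {f : E → F} {A B : Set E} (hA : IsOpen A)
    (hf : DifferentiableOn ℝ f A) (hB : MeasurableSet B) {x : E} (hcone : convexJoin ℝ {x} B ⊆ A)
    {R : ℝ} (hR : ∀ w ∈ B, ‖w - x‖ ≤ R) {p : ℝ} (hp : 1 ≤ p)
    (hpd : (Module.finrank ℝ E : ℝ) < p) :
    ‖f x‖ₑ * μ B ≤ (eLpNorm f (ENNReal.ofReal p) (μ.restrict A)
      + ENNReal.ofReal R * ENNReal.ofReal (p / (p - Module.finrank ℝ E))
        * eLpNorm (fderiv ℝ f) (ENNReal.ofReal p) (μ.restrict A)) * μ B ^ (1 - 1 / p) := by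
  have hseg := forall_lineMap_mem_of_convexJoin_subset hcone
  have hBA : B ⊆ A := fun w hw => by simpa using hseg w hw 1 (by simp)
  have hpointwise : ∀ w ∈ B, ‖f x‖ₑ
      ≤ ‖f w‖ₑ + ENNReal.ofReal R * ∫⁻ t in Ioc (0:ℝ) 1, ‖fderiv ℝ f (lineMap x w t)‖ₑ := by
    intro w hw
    have hdiff : ∀ t ∈ Icc (0:ℝ) 1, DifferentiableAt ℝ f (lineMap x w t) := fun t ht =>
      hf.differentiableAt (hA.mem_nhds (hseg w hw t ht))
    calc ‖f x‖ₑ ≤ ‖f w‖ₑ + ‖f w - f x‖ₑ := by simpa using enorm_sub_le (a := f w) (b := f w - f x)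
      _ ≤ _ := by
        gcongr
        refine (enorm_sub_le_mul_lintegral_enorm_fderiv hdiff).trans ?_
        gcongr
        rw [← ofReal_norm]
        exact ofReal_le_ofReal (hR w hw)
  have hfB : AEStronglyMeasurable f (μ.restrict B) :=
    ((hf.mono hBA).continuousOn).aestronglyMeasurable hB
  calc ‖f x‖ₑ * μ B = ∫⁻ _ in B, ‖f x‖ₑ ∂μ := (setLIntegral_const _ _).symm
    _ ≤ ∫⁻ w in B, (‖f w‖ₑ + ENNReal.ofReal R
          * ∫⁻ t in Ioc (0:ℝ) 1, ‖fderiv ℝ f (lineMap x w t)‖ₑ) ∂μ :=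
        setLIntegral_mono' hB hpointwise
    _ = ∫⁻ w in B, ‖f w‖ₑ ∂μ + ENNReal.ofReal R
          * ∫⁻ w in B, (∫⁻ t in Ioc (0:ℝ) 1, ‖fderiv ℝ f (lineMap x w t)‖ₑ) ∂μ := by
        rw [lintegral_add_left' hfB.enorm, lintegral_const_mul' _ _ ofReal_ne_top]
    _ ≤ eLpNorm f (ENNReal.ofReal p) (μ.restrict A) * μ B ^ (1 - 1 / p) + ENNReal.ofReal R
          * (ENNReal.ofReal (p / (p - Module.finrank ℝ E))
            * eLpNorm (fderiv ℝ f) (ENNReal.ofReal p) (μ.restrict A) * μ B ^ (1 - 1 / p)) := by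
        gcongr
        · refine (setLIntegral_enorm_le_eLpNorm_mul_measure hfB hp).trans ?_
          gcongr
        · exact lintegral_lintegral_enorm_fderiv_lineMap_le μ f hA.measurableSet hB hseg hp hpd
    _ = _ := by ring

theorem norm_le_of_convexJoin_subset {F : Type*} [NormedAddCommGroup F]
    [NormedSpace ℝ F] [CompleteSpace F] {f : E → F} {A B : Set E} (hA : IsOpen A)
    (hf : DifferentiableOn ℝ f A) (hB : MeasurableSet B) (hB0 : μ B ≠ 0) (hBtop : μ B ≠ ∞)
    {x : E} (hcone : convexJoin ℝ {x} B ⊆ A) {R : ℝ} (hR0 : 0 ≤ R) (hR : ∀ w ∈ B, ‖w - x‖ ≤ R)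
    {p : ℝ} (hp : 1 ≤ p) (hpd : (Module.finrank ℝ E : ℝ) < p)
    (hfLp : MemLp f (ENNReal.ofReal p) (μ.restrict A))
    (hf'Lp : MemLp (fderiv ℝ f) (ENNReal.ofReal p) (μ.restrict A)) :
    ‖f x‖ ≤ (μ B).toReal ^ (-1 / p) * ((eLpNorm f (ENNReal.ofReal p) (μ.restrict A)).toReal
      + R * (p / (p - Module.finrank ℝ E))
        * (eLpNorm (fderiv ℝ f) (ENNReal.ofReal p) (μ.restrict A)).toReal) := by
  have hcp : 0 ≤ p / (p - Module.finrank ℝ E) := div_nonneg (by linarith) (by linarith)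
  have hm : 0 < (μ B).toReal := toReal_pos hB0 hBtop
  have hNf := hfLp.eLpNorm_ne_top
  have hNg := hf'Lp.eLpNorm_ne_top
  have key := toReal_mono (by finiteness)
    (enorm_mul_measure_le_of_convexJoin_subset μ hA hf hB hcone hR hp hpd)
  rw [toReal_mul, toReal_enorm, toReal_mul, toReal_add hNf (by finiteness), toReal_mul,
    toReal_mul, toReal_ofReal hR0, toReal_ofReal hcp, ← toReal_rpow] at key
  have hsplit : (μ B).toReal ^ (1 - 1 / p) = (μ B).toReal ^ (-1 / p) * (μ B).toReal := by
    rw [← Real.rpow_add_one hm.ne']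
    ring_nf
  rw [hsplit, ← mul_assoc, mul_comm _ ((μ B).toReal ^ (-1 / p))] at key
  exact le_of_mul_le_mul_right key hm

theorem measure_ball_toReal_rpow (z : E) {c r : ℝ} (hc : 0 < c) (hr : 0 < r) (s : ℝ) :
    (μ (ball z (c * r))).toReal ^ s
      = (c ^ Module.finrank ℝ E * (μ (ball 0 1)).toReal) ^ s
        * r ^ (Module.finrank ℝ E * s) := by
  rw [Measure.addHaar_ball_of_pos μ z (by positivity), toReal_mul, toReal_ofReal (by positivity),
    mul_pow, mul_right_comm, Real.mul_rpow (by positivity) (by positivity), ← Real.rpow_natCast r,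
    ← Real.rpow_mul hr.le]

theorem norm_le_of_convexJoin_ball_subset {F : Type*} [NormedAddCommGroup F] [NormedSpace ℝ F]
    [CompleteSpace F] {f : E → F} {A : Set E} (hA : IsOpen A) (hf : DifferentiableOn ℝ f A)
    {x z : E} {c r : ℝ} (hc : 0 < c) (hr : 0 < r) (hz : ‖z - x‖ + c * r ≤ r)
    (hcone : convexJoin ℝ {x} (ball z (c * r)) ⊆ A) {p : ℝ} (hp : 1 ≤ p)
    (hpd : (Module.finrank ℝ E : ℝ) < p) (hfLp : MemLp f (ENNReal.ofReal p) (μ.restrict A))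
    (hf'Lp : MemLp (fderiv ℝ f) (ENNReal.ofReal p) (μ.restrict A)) :
    ‖f x‖ ≤ p / (p - Module.finrank ℝ E)
      * (c ^ Module.finrank ℝ E * (μ (ball 0 1)).toReal) ^ (-1 / p)
      * r ^ (-(Module.finrank ℝ E : ℝ) / p)
      * ((eLpNorm f (ENNReal.ofReal p) (μ.restrict A)).toReal
        + r * (eLpNorm (fderiv ℝ f) (ENNReal.ofReal p) (μ.restrict A)).toReal) := by
  have key := norm_le_of_convexJoin_subset μ hA hf measurableSet_ball
    (measure_ball_pos _ _ (by positivity)).ne' measure_ball_lt_top.ne hcone hr.le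
    (fun w hw => by linarith [norm_sub_le_norm_sub_add_norm_sub w z x, mem_ball_iff_norm.1 hw])
    hp hpd hfLp hf'Lp
  rw [measure_ball_toReal_rpow μ z hc hr, show (Module.finrank ℝ E : ℝ) * (-1 / p)
    = -(Module.finrank ℝ E : ℝ) / p by ring] at key
  have hcp : 1 ≤ p / (p - Module.finrank ℝ E) :=
    (one_le_div (by linarith)).2 (by linarith [(Module.finrank ℝ E).cast_nonneg (α := ℝ)])
  have hX : 0 ≤ (c ^ Module.finrank ℝ E * (μ (ball 0 1)).toReal) ^ (-1 / p)
      * r ^ (-(Module.finrank ℝ E : ℝ) / p) := by positivity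
  refine key.trans ?_
  have hNf := toReal_nonneg (a := eLpNorm f (ENNReal.ofReal p) (μ.restrict A))
  have hNg := toReal_nonneg (a := eLpNorm (fderiv ℝ f) (ENNReal.ofReal p) (μ.restrict A))
  nlinarith [mul_le_mul_of_nonneg_left (le_mul_of_one_le_left hNf hcp) hX,
    mul_nonneg (mul_nonneg hX hr.le) hNg]

end AddHaar

theorem IsCkGraphAt.exists_chart {n k : ℕ} {Ω : Set (EuclideanSpace ℝ (Fin n))} {α β K : ℝ}
    {x_b : EuclideanSpace ℝ (Fin n)} (hΩ : IsCkGraphAt n k Ω α β K x_b) (hk : 1 ≤ k)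
    (hα : 0 < α) :
    ∃ (e : EuclideanSpace ℝ (Fin n) ≃ₗᵢ[ℝ] WithLp 2 (EuclideanSpace ℝ (Fin (n - 1)) × ℝ))
      (h : EuclideanSpace ℝ (Fin (n - 1)) → ℝ), 0 ≤ K ∧ h 0 = 0 ∧
      (∀ a ∈ ball 0 α, ∀ b ∈ ball 0 α, |h b - h a| ≤ K * ‖b - a‖) ∧
      ∀ u, ‖(e u).fst‖ < α → |(e u).snd - h (e u).fst| < β →
        (x_b + u ∈ Ω ↔ h (e u).fst < (e u).snd) := by
  obtain ⟨e, h, hC, h0, -, hK, hgraph⟩ := hΩ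
  have hderiv : ∀ y ∈ ball (0 : EuclideanSpace ℝ (Fin (n - 1))) α,
      ‖fderivWithin ℝ h (ball 0 α) y‖ ≤ K := fun y hy => by
    rw [← norm_iteratedFDerivWithin_one _ (isOpen_ball.uniqueDiffWithinAt hy)]
    exact hK 1 hk y hy
  refine ⟨e, h, (norm_nonneg _).trans (hderiv 0 (mem_ball_self hα)), h0,
    fun a ha b hb => ?_, fun u hu ht => ?_⟩
  · simpa [Real.norm_eq_abs] using (convex_ball _ _).norm_image_sub_le_of_norm_fderivWithin_le
      (hC.differentiableOn (by norm_cast; omega)) hderiv ha hb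
  · have hcoord : e.symm ((WithLp.equiv 2 _).symm
        ((e u).fst, h (e u).fst + ((e u).snd - h (e u).fst))) = u := by
      simp only [add_sub_cancel, WithLp.equiv_symm_apply]
      exact e.symm_apply_apply u
    rw [← sub_pos, ← hgraph _ _ hu ht, hcoord]

theorem IsCkGraphAt.exists_inward_direction {n k : ℕ} {Ω : Set (EuclideanSpace ℝ (Fin n))}
    {α β K : ℝ} {x_b : EuclideanSpace ℝ (Fin n)} (hΩ : IsCkGraphAt n k Ω α β K x_b) (hk : 1 ≤ k)
    {γ : ℝ} (hγ : 0 ≤ γ) (hγα : γ < α) (hγβ : (1 + K) * γ < β) :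
    ∃ ν : EuclideanSpace ℝ (Fin n), ‖ν‖ = 1 ∧ ∀ x ∈ Ω, ∀ (s : ℝ) (v : EuclideanSpace ℝ (Fin n)),
      ‖x - x_b‖ ≤ γ → ‖x + s • ν + v - x_b‖ ≤ γ → (1 + K) * ‖v‖ ≤ s → x + s • ν + v ∈ Ω := by
  obtain ⟨e, h, hK, h0, hlip, hgraph⟩ := hΩ.exists_chart hk (hγ.trans_lt hγα)
  have hfst : ∀ u, ‖(e u).fst‖ ≤ ‖u‖ := fun u =>
    (WithLp.norm_fst_le _ (e u)).trans (e.norm_map u).le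
  have hsnd : ∀ u, |(e u).snd| ≤ ‖u‖ := fun u =>
    (WithLp.norm_snd_le _ (e u)).trans (e.norm_map u).le
  have hmem_ball : ∀ u, ‖u‖ ≤ γ → (e u).fst ∈ ball 0 α := fun u hu =>
    mem_ball_zero_iff.2 ((hfst u).trans_lt (hu.trans_lt hγα))
  have hchart : ∀ u, ‖u‖ ≤ γ → (x_b + u ∈ Ω ↔ h (e u).fst < (e u).snd) := by
    intro u hu
    refine hgraph u (mem_ball_zero_iff.1 (hmem_ball u hu)) ?_
    have := hlip 0 (mem_ball_self (hγ.trans_lt hγα)) _ (hmem_ball u hu)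
    rw [h0, sub_zero, sub_zero] at this
    calc |(e u).snd - h (e u).fst| ≤ |(e u).snd| + |h (e u).fst| := abs_sub _ _
      _ ≤ ‖u‖ + K * ‖u‖ := add_le_add (hsnd u) (this.trans (by gcongr; exact hfst u))
      _ ≤ (1 + K) * γ := by nlinarith
      _ < β := hγβ
  set ν := e.symm (WithLp.toLp 2 (0, 1))
  refine ⟨ν, by simp [ν], ?_⟩
  intro x hx s v hx' hy' hv
  obtain ⟨u, rfl⟩ : ∃ u, x = x_b + u := ⟨x - x_b, by abel⟩
  rw [add_sub_cancel_left] at hx'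
  rw [show x_b + u + s • ν + v - x_b = u + s • ν + v by abel] at hy'
  rw [add_assoc, add_assoc, ← add_assoc u, hchart _ hy']
  have hx_above := (hchart u hx').1 hx
  have hstep := hlip _ (hmem_ball u hx') _ (hmem_ball _ hy')
  simp only [map_add, map_smul, ν, LinearIsometryEquiv.apply_symm_apply, WithLp.add_fst,
    WithLp.add_snd, WithLp.smul_fst, WithLp.smul_snd, WithLp.toLp_fst, WithLp.toLp_snd, smul_zero,
    add_zero, smul_eq_mul, mul_one, add_sub_cancel_left] at hstep ⊢
  have hKv : K * ‖(e v).fst‖ ≤ K * ‖v‖ := by gcongr; exact hfst v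
  linarith [(abs_le.1 hstep).2, (abs_le.1 (hsnd v)).1]

theorem exists_convexJoin_ball_subset {n k : ℕ} {Ω : Set (EuclideanSpace ℝ (Fin n))}
    {α β K : ℝ} (hgr : ∀ x_b ∈ frontier Ω, IsCkGraphAt n k Ω α β K x_b) (hk : 1 ≤ k)
    {x₀ x : EuclideanSpace ℝ (Fin n)} {r : ℝ} (hr : 0 < r) (hrα : 3 * r < α)
    (hrβ : (1 + max K 0) * (3 * r) < β) (hx₀ : x₀ ∈ Ω) (hdist : infDist x₀ (frontier Ω) < r)
    (hx : x ∈ ball x₀ r ∩ Ω) :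
    ∃ z, ‖z - x‖ + (8 * (1 + max K 0))⁻¹ * r ≤ r ∧
      convexJoin ℝ {x} (ball z ((8 * (1 + max K 0))⁻¹ * r)) ⊆ ball x₀ (2 * r) ∩ Ω := by
  set ρ := (8 * (1 + max K 0))⁻¹ * r
  have hK' : (1 + max K 0) * ρ = r / 8 := by
    simp only [ρ]; field_simp
  have hρ : 0 < ρ := by positivity
  have hρr : ρ ≤ r / 8 := by nlinarith [le_max_right K 0]
  suffices ∃ z, ‖z - x‖ ≤ r / 2 ∧ ∀ w ∈ ball z ρ, segment ℝ x w ⊆ Ω by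
    obtain ⟨z, hz, hseg⟩ := this
    refine ⟨z, by linarith, ?_⟩
    rw [convexJoin_singleton_left]
    refine iUnion₂_subset fun w hw => subset_inter ((convex_ball x₀ (2 * r)).segment_subset
      (ball_subset_ball (by linarith) hx.1) ?_) (hseg w hw)
    rw [mem_ball] at hw ⊢
    linarith [dist_triangle4 w z x x₀, mem_ball.1 hx.1, dist_eq_norm z x]
  rcases (frontier Ω).eq_empty_or_nonempty with hfr | hfr
  · have hΩ : Ω = univ := (isClopen_iff_frontier_eq_empty.2 hfr).eq_univ ⟨x₀, hx₀⟩
    exact ⟨x, by simp; positivity, fun w _ => hΩ ▸ subset_univ _⟩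
  obtain ⟨x_b, hx_b, hx₀b⟩ := (infDist_lt_iff hfr).1 hdist
  have hxb : ‖x - x_b‖ < 2 * r := by
    rw [← dist_eq_norm]
    linarith [dist_triangle x x₀ x_b, mem_ball.1 hx.1]
  obtain ⟨ν, hν, hinward⟩ := (hgr x_b hx_b).exists_inward_direction hk (γ := 3 * r) (by positivity)
    hrα (lt_of_le_of_lt (by gcongr; exact le_max_left K 0) hrβ)
  -- At time `t` the segment has risen by `t r / 2` along `ν`, while the offset
  -- `t • (w - (x + (r / 2) • ν))` lowers it relative to the graph by at most
  -- `(1 + K) t ρ = t r / 8`.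
  refine ⟨x + (r / 2) • ν, by simp [norm_smul, hν, abs_of_pos hr], fun w hw => ?_⟩
  rw [segment_eq_image_lineMap]
  rintro _ ⟨t, ⟨ht0, ht1⟩, rfl⟩
  have hwz : ‖w - (x + (r / 2) • ν)‖ < ρ := mem_ball_iff_norm.1 hw
  have hv : ‖t • (w - (x + (r / 2) • ν))‖ ≤ t * ρ := by
    rw [norm_smul, Real.norm_of_nonneg ht0]; gcongr
  rw [show lineMap x w t = x + (t * (r / 2)) • ν + t • (w - (x + (r / 2) • ν)) by
    rw [lineMap_apply_module]; module]
  refine hinward x hx.2 _ _ (by linarith) ?_ ?_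
  · calc ‖x + (t * (r / 2)) • ν + t • (w - (x + (r / 2) • ν)) - x_b‖
        ≤ ‖x - x_b‖ + ‖(t * (r / 2)) • ν‖ + ‖t • (w - (x + (r / 2) • ν))‖ := by
          rw [show x + (t * (r / 2)) • ν + t • (w - (x + (r / 2) • ν)) - x_b
            = (x - x_b) + (t * (r / 2)) • ν + t • (w - (x + (r / 2) • ν)) by abel]
          exact norm_add₃_le
      _ ≤ 3 * r := by
          rw [norm_smul, hν, Real.norm_of_nonneg (by positivity)]
          nlinarith
  · calc (1 + K) * ‖t • (w - (x + (r / 2) • ν))‖ ≤ (1 + max K 0) * (t * ρ) := by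
          have : 0 ≤ 1 + max K 0 := by linarith [le_max_right K 0]
          exact mul_le_mul (by linarith [le_max_left K 0]) hv (norm_nonneg _) this
      _ ≤ t * (r / 2) := by nlinarith

/-- Proposition A.1: boundary interpolation inequality on a uniformly
`C¹` domain for `p > n`: there are `r₀, C` such that for `x₀ ∈ Ω`, `0 < r ≤ r₀` with
`d_Ω(x₀) < r`,
`‖φ‖_{L^∞(Ω_{x₀,r})} ≤ C r^{-n/p}(‖φ‖_{L^p(Ω_{x₀,2r})} + r‖∇φ‖_{L^p(Ω_{x₀,2r})})`. -/
theorem stmt9 (n : ℕ) (hn : 2 ≤ n) (Ω : Set (EuclideanSpace ℝ (Fin n)))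
    (hΩ : IsUniformlyCkDomain n 1 Ω) (p : ℝ) (hp : (n : ℝ) < p) :
    ∃ r₀ > (0:ℝ), ∃ C > (0:ℝ), ∀ x₀ ∈ Ω, ∀ r : ℝ, 0 < r → r ≤ r₀ →
      infDist x₀ (frontier Ω) < r →
      ∀ φ : EuclideanSpace ℝ (Fin n) → ℝ, DifferentiableOn ℝ φ Ω →
      MemLp φ (ENNReal.ofReal p) (volume.restrict (ball x₀ (2*r) ∩ Ω)) →
      MemLp (fun x => fderivWithin ℝ φ Ω x) (ENNReal.ofReal p)
        (volume.restrict (ball x₀ (2*r) ∩ Ω)) →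
      ∀ x ∈ ball x₀ r ∩ Ω,
        |φ x| ≤ C * r ^ (-(n : ℝ) / p) *
          ((eLpNorm φ (ENNReal.ofReal p) (volume.restrict (ball x₀ (2*r) ∩ Ω))).toReal +
            r * (eLpNorm (fun x => fderivWithin ℝ φ Ω x) (ENNReal.ofReal p)
              (volume.restrict (ball x₀ (2*r) ∩ Ω))).toReal) := by
  obtain ⟨hΩo, -, α, hα, β, hβ, K, hgr⟩ := hΩ
  have hp1 : 1 ≤ p := by linarith [show (2 : ℝ) ≤ n by exact_mod_cast hn]
  have hv : 0 < (volume (ball (0 : EuclideanSpace ℝ (Fin n)) 1)).toReal :=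
    toReal_pos (measure_ball_pos _ _ one_pos).ne' measure_ball_lt_top.ne
  refine ⟨min (α / 4) (β / (4 * (1 + max K 0))), by positivity, p / (p - n)
    * ((8 * (1 + max K 0))⁻¹ ^ n * (volume (ball (0 : EuclideanSpace ℝ (Fin n)) 1)).toReal)
      ^ (-1 / p), mul_pos (div_pos (by linarith) (by linarith))
        (Real.rpow_pos_of_pos (mul_pos (by positivity) hv) _), ?_⟩
  intro x₀ hx₀ r hr hrr₀ hdist φ hφ hφLp hφ'Lp x hx
  have hrα : 3 * r < α := by linarith [min_le_left (α / 4) (β / (4 * (1 + max K 0)))]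
  have hrβ : (1 + max K 0) * (3 * r) < β := by
    have := (le_div_iff₀ (by positivity)).1 (hrr₀.trans (min_le_right _ _))
    nlinarith
  have hderiv : fderiv ℝ φ =ᵐ[volume.restrict (ball x₀ (2 * r) ∩ Ω)] fderivWithin ℝ φ Ω :=
    ae_restrict_of_forall_mem (isOpen_ball.inter hΩo).measurableSet
      fun y hy => (fderivWithin_of_isOpen hΩo hy.2).symm
  obtain ⟨z, hz, hcone⟩ := exists_convexJoin_ball_subset hgr le_rfl hr hrα hrβ hx₀ hdist hx
  have key := norm_le_of_convexJoin_ball_subset volume (isOpen_ball.inter hΩo)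
    (hφ.mono inter_subset_right) (by positivity) hr hz hcone hp1
    (by rwa [finrank_euclideanSpace_fin]) hφLp ((memLp_congr_ae hderiv).2 hφ'Lp)
  rwa [eLpNorm_congr_ae hderiv, finrank_euclideanSpace_fin, Real.norm_eq_abs] at key
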